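/- Let S be a countable type, P : S → S → ℝ≥0∞ a stochastic kernel (∑'_{y} P x y = 1 for every x), U : S → S → ℝ≥0∞ with U x y ≤ P x y for all x, y, and δ ∈ ℝ≥0∞. Define the thresholding operator T_δ by (T_δ v) x = v x if v x ≥ δ and (T_δ v) x = 0 otherwise. Let μ, v₀ : S → ℝ≥0∞ with v₀ x ≤ μ x for all x, and define the on-the-fly iteration v_{i+1} = T_δ (v_i · U). Then for every i ∈ ℕ and every x ∈ S: v_i x ≤ (μ·P^i) x. -/

import Mathlib

open scoped ENNReal

/-- The one-step image `v·K` of a vector `v` under a kernel `K`. -/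
noncomputable def kernelStep {S : Type*} (v : S → ℝ≥0∞) (K : S → S → ℝ≥0∞) : S → ℝ≥0∞ :=
  fun y => ∑' x, v x * K x y

/-- The `i`-fold iterate `v·K^i` (so `v·K^0 = v` and `v·K^{i+1} = (v·K^i)·K`). -/
noncomputable def kernelIter {S : Type*} (v : S → ℝ≥0∞) (K : S → S → ℝ≥0∞) : ℕ → S → ℝ≥0∞
  | 0 => v
  | i + 1 => kernelStep (kernelIter v K i) K

/-- The thresholding operator of the on-the-fly algorithm: entries below `δ` are set
to zero. -/
noncomputable def threshold {S : Type*} (δ : ℝ≥0∞) (v : S → ℝ≥0∞) : S → ℝ≥0∞ :=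
  fun x => if δ ≤ v x then v x else 0

theorem threshold_le {S : Type*} (δ : ℝ≥0∞) (v : S → ℝ≥0∞) : threshold δ v ≤ v := fun x => by
  unfold threshold
  split_ifs <;> simp

theorem kernelStep_mono {S : Type*} {v w : S → ℝ≥0∞} {K L : S → S → ℝ≥0∞}
    (hvw : v ≤ w) (hKL : K ≤ L) : kernelStep v K ≤ kernelStep w L := fun y =>
  ENNReal.tsum_le_tsum fun x => mul_le_mul' (hvw x) (hKL x y)

theorem on_the_fly_lower_bound_general
    {S : Type*}
    (P : S → S → ℝ≥0∞)
    (U : S → S → ℝ≥0∞) (hU : ∀ x y, U x y ≤ P x y)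
    (δ : ℝ≥0∞)
    (μ v₀ : S → ℝ≥0∞) (hv₀ : ∀ x, v₀ x ≤ μ x)
    (v : ℕ → S → ℝ≥0∞) (hv0 : v 0 = v₀)
    (hvs : ∀ i, v (i + 1) = threshold δ (kernelStep (v i) U)) :
    ∀ (i : ℕ) (x : S), v i x ≤ kernelIter μ P i x := by
  intro i
  induction i with
  | zero => exact hv0 ▸ hv₀
  | succ i ih =>
    rw [hvs i]
    exact (threshold_le δ _).trans (kernelStep_mono ih hU)

/-- The on-the-fly iteration (lower-bound step followed by thresholding) stays a
pointwise underapproximation of the true DTMC distributions `μ·P^i`. -/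
theorem on_the_fly_lower_bound
    {S : Type*} [Countable S]
    (P : S → S → ℝ≥0∞) (hP : ∀ x, ∑' y, P x y = 1)
    (U : S → S → ℝ≥0∞) (hU : ∀ x y, U x y ≤ P x y)
    (δ : ℝ≥0∞)
    (μ v₀ : S → ℝ≥0∞) (hv₀ : ∀ x, v₀ x ≤ μ x)
    (v : ℕ → S → ℝ≥0∞) (hv0 : v 0 = v₀)
    (hvs : ∀ i, v (i + 1) = threshold δ (kernelStep (v i) U)) :
    ∀ (i : ℕ) (x : S), v i x ≤ kernelIter μ P i x :=
  on_the_fly_lower_bound_general P U hU δ μ v₀ hv₀ v hv0 hvs
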